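/- arXiv:2012.07245 — 2 statements merged into one kernel-verified Lean document; each statement's English description precedes it below -/
import Mathlib

section
/- For a real random variable Y with E|Y| < ∞ and α ∈ (0,1), every α-quantile of Y minimizes y' ↦ E[ℓ_α(Y, y')] over y' ∈ R, where ℓ_α(y, y') = max{(α−1)(y−y'), α(y−y')} is the pinball loss. -/
/-!
As a function of the prediction `t`, the pinball loss `ρ_α(y - t)` is convex with subgradient
`𝟙{y ≤ q} - α` (and also `𝟙{y < q} - α`) at `t = q`. Taking expectations,
`E ρ_α(Y - t) ≥ E ρ_α(Y - q) + (t - q) (P(Y ∈ S) - α)` for `S = {Y ≤ q}` or `S = {Y < q}`.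
For `t ≥ q` take `S = {Y ≤ q}`, where `P(Y ≤ q) ≥ α`; for `t ≤ q` take `S = {Y < q}`, where
`P(Y < q) = 1 - P(Y ≥ q) ≤ α`. In both cases the correction term is nonnegative.
-/

open MeasureTheory

def pinballLoss (α u : ℝ) : ℝ := max ((α - 1) * u) (α * u)

lemma pinballLoss_of_nonpos (α : ℝ) {u : ℝ} (hu : u ≤ 0) : pinballLoss α u = (α - 1) * u :=
  max_eq_left (by nlinarith)

lemma pinballLoss_of_nonneg (α : ℝ) {u : ℝ} (hu : 0 ≤ u) : pinballLoss α u = α * u :=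
  max_eq_right (by nlinarith)

lemma pinballLoss_add_le_of_nonpos (α : ℝ) {u : ℝ} (hu : u ≤ 0) (v : ℝ) :
    pinballLoss α u + (α - 1) * (v - u) ≤ pinballLoss α v := by
  rw [pinballLoss_of_nonpos α hu]
  exact le_of_eq_of_le (by ring) (le_max_left _ _)

lemma pinballLoss_add_le_of_nonneg (α : ℝ) {u : ℝ} (hu : 0 ≤ u) (v : ℝ) :
    pinballLoss α u + α * (v - u) ≤ pinballLoss α v := by
  rw [pinballLoss_of_nonneg α hu]
  exact le_of_eq_of_le (by ring) (le_max_right _ _)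

lemma pinballLoss_add_indicator_le {Ω : Type*} {Y : Ω → ℝ} (α : ℝ) {q : ℝ} {S : Set Ω}
    (hlt : {ω | Y ω < q} ⊆ S) (hle : S ⊆ {ω | Y ω ≤ q}) (t : ℝ) (ω : Ω) :
    pinballLoss α (Y ω - q) + (q - t) * (α - S.indicator 1 ω) ≤ pinballLoss α (Y ω - t) := by
  by_cases hω : ω ∈ S
  · have := pinballLoss_add_le_of_nonpos α (sub_nonpos.2 (hle hω)) (Y ω - t)
    rw [Set.indicator_of_mem hω, Pi.one_apply]
    linarith
  · have := pinballLoss_add_le_of_nonneg α (sub_nonneg.2 (not_lt.1 fun h ↦ hω (hlt h))) (Y ω - t)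
    rw [Set.indicator_of_notMem hω, sub_zero]
    linarith

section Expectation

variable {Ω : Type*} [MeasurableSpace Ω] {μ : Measure Ω} {Y : Ω → ℝ}

lemma MeasureTheory.Integrable.pinballLoss_sub [IsFiniteMeasure μ] (hY : Integrable Y μ)
    (α c : ℝ) :
    Integrable (fun ω ↦ pinballLoss α (Y ω - c)) μ :=
  have hYc := hY.sub (integrable_const c)
  (hYc.const_mul (α - 1)).sup (hYc.const_mul α)

lemma integral_pinballLoss_add_le [IsProbabilityMeasure μ] (hY : Integrable Y μ) (α : ℝ)
    {q : ℝ} {S : Set Ω} (hS : NullMeasurableSet S μ)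
    (hlt : {ω | Y ω < q} ⊆ S) (hle : S ⊆ {ω | Y ω ≤ q}) (t : ℝ) :
    ∫ ω, pinballLoss α (Y ω - q) ∂μ + (q - t) * (α - μ.real S) ≤
      ∫ ω, pinballLoss α (Y ω - t) ∂μ := by
  have hind : Integrable (S.indicator (1 : Ω → ℝ)) μ := (integrable_const 1).indicator₀ hS
  have hcorr : Integrable (fun ω ↦ (q - t) * (α - S.indicator 1 ω)) μ :=
    ((integrable_const α).sub hind).const_mul (q - t)
  have hmean : ∫ ω, (q - t) * (α - S.indicator 1 ω) ∂μ = (q - t) * (α - μ.real S) := by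
    rw [integral_const_mul, integral_sub (integrable_const α) hind, integral_const,
      integral_indicator₀ hS]
    simp
  rw [← hmean, ← integral_add (hY.pinballLoss_sub α q) hcorr]
  exact integral_mono ((hY.pinballLoss_sub α q).add hcorr) (hY.pinballLoss_sub α t)
    (pinballLoss_add_indicator_le α hlt hle t)

end Expectation

theorem stmt12_general {Ω : Type*} [MeasurableSpace Ω] (μ : Measure Ω)
    [IsProbabilityMeasure μ]
    (Y : Ω → ℝ) (hY : Integrable Y μ)
    (α : ℝ)
    (q : ℝ)
    (hq1 : ENNReal.ofReal α ≤ μ {ω | Y ω ≤ q})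
    (hq2 : ENNReal.ofReal (1 - α) ≤ μ {ω | q ≤ Y ω}) :
    ∀ y' : ℝ,
      ∫ ω, max ((α - 1) * (Y ω - q)) (α * (Y ω - q)) ∂μ ≤
      ∫ ω, max ((α - 1) * (Y ω - y')) (α * (Y ω - y')) ∂μ := by
  intro t
  change ∫ ω, pinballLoss α (Y ω - q) ∂μ ≤ ∫ ω, pinballLoss α (Y ω - t) ∂μ
  have hYm := hY.aemeasurable
  rcases le_total q t with hqt | htq
  · have hle : α ≤ μ.real {ω | Y ω ≤ q} :=
      (ENNReal.ofReal_le_iff_le_toReal (measure_ne_top _ _)).1 hq1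
    have hbound := integral_pinballLoss_add_le hY α
      (nullMeasurableSet_le hYm aemeasurable_const) (fun ω (h : Y ω < q) ↦ h.le) subset_rfl t
    linarith [mul_nonneg_of_nonpos_of_nonpos (sub_nonpos.2 hqt) (sub_nonpos.2 hle)]
  · have hge : 1 - α ≤ μ.real {ω | q ≤ Y ω} :=
      (ENNReal.ofReal_le_iff_le_toReal (measure_ne_top _ _)).1 hq2
    have hlt : μ.real {ω | Y ω < q} = 1 - μ.real {ω | q ≤ Y ω} := by
      simpa only [Set.compl_ofPred, not_le] using
        probReal_compl_eq_one_sub₀ (nullMeasurableSet_le aemeasurable_const hYm)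
    have hbound := integral_pinballLoss_add_le hY α
      (nullMeasurableSet_lt hYm aemeasurable_const) subset_rfl (fun ω (h : Y ω < q) ↦ h.le) t
    linarith [mul_nonneg (sub_nonneg.2 htq) (by linarith : 0 ≤ α - μ.real {ω | Y ω < q})]

theorem stmt12 {Ω : Type*} [MeasurableSpace Ω] (μ : Measure Ω)
    [IsProbabilityMeasure μ]
    (Y : Ω → ℝ) (hY : Integrable Y μ)
    (α : ℝ) (hα : α ∈ Set.Ioo (0 : ℝ) 1)
    (q : ℝ)
    (hq1 : ENNReal.ofReal α ≤ μ {ω | Y ω ≤ q})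
    (hq2 : ENNReal.ofReal (1 - α) ≤ μ {ω | q ≤ Y ω}) :
    ∀ y' : ℝ,
      ∫ ω, max ((α - 1) * (Y ω - q)) (α * (Y ω - q)) ∂μ ≤
      ∫ ω, max ((α - 1) * (Y ω - y')) (α * (Y ω - y')) ∂μ :=
  stmt12_general μ Y hY α q hq1 hq2
end

section
/- Let λ₁ ≥ ... ≥ λ_C > 0 be the nonzero eigenvalues of BBᵀ (B an S×C matrix of full column rank), let Q = diag(σ₁²,...,σ_S²), Σ = BBᵀ + Q, and let δ = max_j |σ_j² − s̄| with s̄ the average of the σ_j². If λ_C > 2δ, then the C-th largest eigenvalue μ_C of Σ is strictly greater than the (C+1)-st largest eigenvalue μ_{C+1}: indeed μ_C ≥ λ_C + s̄ − δ > s̄ + δ ≥ μ_{C+1}. -/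
/-! Weyl's inequality in counting form: if `x ⬝ᵥ D x ≥ c ‖x‖²` for all `x`, then `A + D` has at
least as many eigenvalues `≥ t + c` as `A` has eigenvalues `≥ t`. Indeed, on the span of the
eigenvectors of `A` with eigenvalue `≥ t` the quadratic form of `A + D` is `≥ (t + c) ‖x‖²`, so this
span meets the span of the eigenvectors of `A + D` with eigenvalue `< t + c` only in `0`.
Here `A = B Bᵀ` has `C` eigenvalues `≥ λ_C` and `S - C` zero eigenvalues, and the quadratic form
of `D = Q` lies between `s̄ - δ` and `s̄ + δ`; since the eigenvalues `μ_k` are sorted, counting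
them gives `μ_C ≥ λ_C + s̄ - δ` and `μ_{C+1} ≤ s̄ + δ`. -/

open Matrix Polynomial Module Finset

theorem Antitone.le_apply_of_lt_card_filter {m : ℕ} {β : Type*} [LinearOrder β] {μ : Fin m → β}
    (hμ : Antitone μ) {t : β} {k : Fin m} (hk : k.val < #{i | t ≤ μ i}) : t ≤ μ k := by
  by_contra! hlt
  have hsub : ({i | t ≤ μ i} : Finset (Fin m)) ⊆ Iio k := fun i hi => by
    simp only [mem_filter, mem_univ, true_and] at hi
    exact mem_Iio.mpr (lt_of_not_ge fun hki => (hlt.trans_le' (hμ hki)).not_ge hi)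
  have := card_le_card hsub
  rw [Fin.card_Iio] at this
  omega

theorem Antitone.apply_le_of_card_filter {m : ℕ} {β : Type*} [LinearOrder β] {μ : Fin m → β}
    (hμ : Antitone μ) {t : β} {k : Fin m} (hk : m - k.val ≤ #{i | μ i ≤ t}) : μ k ≤ t := by
  by_contra! hlt
  have hsub : ({i | μ i ≤ t} : Finset (Fin m)) ⊆ Ioi k := fun i hi => by
    simp only [mem_filter, mem_univ, true_and] at hi
    exact mem_Ioi.mpr (lt_of_not_ge fun hik => (hlt.trans_le (hμ hik)).not_ge hi)
  have := card_le_card hsub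
  rw [Fin.card_Ioi] at this
  omega

theorem card_filter_eq_countP_map {ι β : Type*} [Fintype ι] (μ : ι → β) (p : β → Prop)
    [DecidablePred p] : #{j | p (μ j)} = (univ.val.map μ).countP p := by
  rw [Multiset.countP_map]
  rfl

namespace Polynomial

variable {R : Type*} [CommRing R] [IsDomain R] {ι : Type*} [Fintype ι]

theorem roots_fintype_prod_X_sub_C (μ : ι → R) :
    (∏ i, (X - C (μ i))).roots = univ.val.map μ := by
  rw [roots_prod _ _ (prod_ne_zero_iff.mpr fun i _ => X_sub_C_ne_zero _)]
  simp

theorem countP_roots_fintype_prod_X_sub_C_mul_X_pow (μ : ι → R) (k : ℕ) (p : R → Prop)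
    [DecidablePred p] :
    ((∏ i, (X - C (μ i))) * X ^ k).roots.countP p = #{i | p (μ i)} + if p 0 then k else 0 := by
  have hne : (∏ i, (X - C (μ i))) * X ^ k ≠ 0 :=
    ((monic_prod_of_monic _ _ fun i _ => monic_X_sub_C _).mul (monic_X_pow _)).ne_zero
  rw [roots_mul hne, roots_fintype_prod_X_sub_C, roots_X_pow, Multiset.countP_add,
    card_filter_eq_countP_map]
  simp only [Multiset.countP_nsmul, ← Multiset.cons_zero, Multiset.countP_cons,
    Multiset.countP_zero]
  split_ifs <;> simp

end Polynomial

theorem Matrix.IsHermitian.card_filter_eigenvalues_eq_countP_roots {n : Type*} [Fintype n]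
    [DecidableEq n] {A : Matrix n n ℝ} (hA : A.IsHermitian) (p : ℝ → Prop) [DecidablePred p] :
    #{j | p (hA.eigenvalues j)} = A.charpoly.roots.countP p := by
  rw [hA.roots_charpoly_eq_eigenvalues, card_filter_eq_countP_map]
  rfl

section DotProductEquations

variable {n ι : Type*} [Fintype n] (g : ι → n → ℝ) (s : Finset ι)

theorem exists_submodule_dotProduct_eq_zero :
    ∃ V : Submodule ℝ (n → ℝ), Fintype.card n ≤ finrank ℝ V + #s ∧
      ∀ x ∈ V, ∀ j ∈ s, g j ⬝ᵥ x = 0 := by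
  let f := (Matrix.of fun j : s => g j).mulVecLin
  refine ⟨LinearMap.ker f, ?_, fun x hx j hj => congrFun (LinearMap.mem_ker.mp hx) ⟨j, hj⟩⟩
  have hrange : finrank ℝ (LinearMap.range f) ≤ #s := by
    simpa using (LinearMap.range f).finrank_le
  have := f.finrank_range_add_finrank_ker
  rw [finrank_fintype_fun_eq_card] at this
  omega

theorem finrank_le_card_of_dotProduct_eq_zero {V : Submodule ℝ (n → ℝ)}
    (hV : ∀ x ∈ V, (∀ j ∈ s, g j ⬝ᵥ x = 0) → x = 0) : finrank ℝ V ≤ #s := by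
  let f := (Matrix.of fun j : s => g j).mulVecLin ∘ₗ V.subtype
  have hf : Function.Injective f := by
    rw [← LinearMap.ker_eq_bot, Submodule.eq_bot_iff]
    exact fun x hx => Subtype.ext <| hV x x.2 fun j hj => congrFun (LinearMap.mem_ker.mp hx) ⟨j, hj⟩
  simpa using LinearMap.finrank_le_finrank_of_injective hf

end DotProductEquations

namespace OrthonormalBasis

variable {n : Type*} [Fintype n] (b : OrthonormalBasis n ℝ (EuclideanSpace ℝ n))

theorem sum_dotProduct_mul_dotProduct (x y : n → ℝ) :
    ∑ j, (b j ⬝ᵥ x) * (b j ⬝ᵥ y) = x ⬝ᵥ y := by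
  have := b.sum_inner_mul_inner (WithLp.toLp 2 x) (WithLp.toLp 2 y)
  simp only [EuclideanSpace.inner_eq_star_dotProduct, star_trivial] at this
  simpa [dotProduct_comm] using this

theorem dotProduct_self_eq_sum_sq (x : n → ℝ) : x ⬝ᵥ x = ∑ j, (b j ⬝ᵥ x) ^ 2 := by
  simp only [sq, b.sum_dotProduct_mul_dotProduct]

variable {b} {A : Matrix n n ℝ} {ev : n → ℝ}

theorem dotProduct_mulVec_eq_sum (hA : A.IsSymm) (hb : ∀ j, A *ᵥ b j = ev j • b j)
    (x : n → ℝ) : x ⬝ᵥ (A *ᵥ x) = ∑ j, ev j * (b j ⬝ᵥ x) ^ 2 := by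
  rw [← b.sum_dotProduct_mul_dotProduct]
  refine sum_congr rfl fun j _ => ?_
  rw [dotProduct_mulVec, ← mulVec_transpose, hA.eq, hb, smul_dotProduct, smul_eq_mul]
  ring

end OrthonormalBasis

section Spectral

variable {n : Type*} [Fintype n] {A : Matrix n n ℝ} {b : OrthonormalBasis n ℝ (EuclideanSpace ℝ n)}
  {ev : n → ℝ}

theorem exists_submodule_le_dotProduct_mulVec (hA : A.IsSymm) (hb : ∀ j, A *ᵥ b j = ev j • b j)
    (t : ℝ) : ∃ V : Submodule ℝ (n → ℝ), #{j | t ≤ ev j} ≤ finrank ℝ V ∧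
      ∀ x ∈ V, t * (x ⬝ᵥ x) ≤ x ⬝ᵥ (A *ᵥ x) := by
  obtain ⟨V, hdim, hV⟩ := exists_submodule_dotProduct_eq_zero (fun j => ⇑(b j)) {j | ev j < t}
  refine ⟨V, ?_, fun x hx => ?_⟩
  · have := card_filter_add_card_filter_not (s := univ) (fun j => t ≤ ev j)
    simp only [not_le, card_univ] at this
    omega
  rw [b.dotProduct_self_eq_sum_sq, OrthonormalBasis.dotProduct_mulVec_eq_sum hA hb, mul_sum]
  refine sum_le_sum fun j _ => ?_
  rcases lt_or_ge (ev j) t with hj | hj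
  · simp [hV x hx j (by simpa using hj)]
  · exact mul_le_mul_of_nonneg_right hj (sq_nonneg _)

theorem finrank_le_card_of_le_dotProduct_mulVec (hA : A.IsSymm)
    (hb : ∀ j, A *ᵥ b j = ev j • b j) {V : Submodule ℝ (n → ℝ)} {t : ℝ}
    (hV : ∀ x ∈ V, t * (x ⬝ᵥ x) ≤ x ⬝ᵥ (A *ᵥ x)) : finrank ℝ V ≤ #{j | t ≤ ev j} := by
  refine finrank_le_card_of_dotProduct_eq_zero (fun j => ⇑(b j)) _ fun x hx h0 => ?_
  by_contra hx0
  obtain ⟨k, -, hk⟩ : ∃ k ∈ univ, (b k ⬝ᵥ x) ^ 2 ≠ 0 := by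
    refine exists_ne_zero_of_sum_ne_zero ?_
    rw [← b.dotProduct_self_eq_sum_sq]
    exact mt dotProduct_self_eq_zero.mp hx0
  have hlt : x ⬝ᵥ (A *ᵥ x) < t * (x ⬝ᵥ x) := by
    rw [b.dotProduct_self_eq_sum_sq, OrthonormalBasis.dotProduct_mulVec_eq_sum hA hb, mul_sum]
    refine sum_lt_sum (fun j _ => ?_) ⟨k, mem_univ _, ?_⟩
    · rcases lt_or_ge (ev j) t with hj | hj
      · exact mul_le_mul_of_nonneg_right hj.le (sq_nonneg _)
      · simp [h0 j (by simpa using hj)]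
    · have hkt : ev k < t := not_le.mp fun h => hk (by simp [h0 k (by simpa using h)])
      exact mul_lt_mul_of_pos_right hkt (lt_of_le_of_ne (sq_nonneg _) hk.symm)
  exact (hV x hx).not_gt hlt

end Spectral

section Weyl

variable {n : Type*} [Fintype n] {A D : Matrix n n ℝ}
  {b b' : OrthonormalBasis n ℝ (EuclideanSpace ℝ n)} {ev ev' : n → ℝ}

theorem card_le_eigenvalues_le_card_le_eigenvalues_add (hA : A.IsSymm)
    (hb : ∀ j, A *ᵥ b j = ev j • b j) (hAD : (A + D).IsSymm)
    (hb' : ∀ j, (A + D) *ᵥ b' j = ev' j • b' j) {c : ℝ}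
    (hD : ∀ x, c * (x ⬝ᵥ x) ≤ x ⬝ᵥ (D *ᵥ x)) (t : ℝ) :
    #{j | t ≤ ev j} ≤ #{j | t + c ≤ ev' j} := by
  obtain ⟨V, hdim, hV⟩ := exists_submodule_le_dotProduct_mulVec hA hb t
  refine hdim.trans (finrank_le_card_of_le_dotProduct_mulVec hAD hb' fun x hx => ?_)
  rw [add_mulVec, dotProduct_add, add_mul]
  exact add_le_add (hV x hx) (hD x)

theorem card_eigenvalues_le_le_card_eigenvalues_le_add (hA : A.IsSymm)
    (hb : ∀ j, A *ᵥ b j = ev j • b j) (hAD : (A + D).IsSymm)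
    (hb' : ∀ j, (A + D) *ᵥ b' j = ev' j • b' j) {c : ℝ}
    (hD : ∀ x, x ⬝ᵥ (D *ᵥ x) ≤ c * (x ⬝ᵥ x)) (t : ℝ) :
    #{j | ev j ≤ t} ≤ #{j | ev' j ≤ t + c} := by
  have hneg {M : Matrix n n ℝ} {v : EuclideanSpace ℝ n} {e : ℝ} (h : M *ᵥ v = e • v) :
      (-M) *ᵥ v = (-e) • v := by rw [neg_mulVec, h, neg_smul]
  have := card_le_eigenvalues_le_card_le_eigenvalues_add (D := -D) hA.neg (fun j => hneg (hb j))
    (by rw [← neg_add]; exact hAD.neg) (fun j => by rw [← neg_add]; exact hneg (hb' j))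
    (c := -c) (fun x => by rw [neg_mulVec, dotProduct_neg]; linarith [hD x]) (-t)
  simpa only [← neg_add, neg_le_neg_iff] using this

end Weyl

theorem abs_dotProduct_diagonal_mulVec_sub_le {n : Type*} [Fintype n] [DecidableEq n]
    {d : n → ℝ} {c δ : ℝ} (hd : ∀ j, |d j - c| ≤ δ) (x : n → ℝ) :
    |x ⬝ᵥ (diagonal d *ᵥ x) - c * (x ⬝ᵥ x)| ≤ δ * (x ⬝ᵥ x) := by
  have hsum : x ⬝ᵥ (diagonal d *ᵥ x) - c * (x ⬝ᵥ x) = ∑ j, (d j - c) * x j ^ 2 := by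
    simp only [dotProduct, mulVec_diagonal, mul_sum, ← sum_sub_distrib]
    exact sum_congr rfl fun j _ => by ring
  have hnorm : x ⬝ᵥ x = ∑ j, x j ^ 2 := by simp only [dotProduct, sq]
  rw [hsum, hnorm, mul_sum]
  refine (abs_sum_le_sum_abs _ _).trans (sum_le_sum fun j _ => ?_)
  rw [abs_mul, abs_of_nonneg (sq_nonneg (x j))]
  exact mul_le_mul_of_nonneg_right (hd j) (sq_nonneg _)

theorem stmt17 {S C : ℕ} (hC : 0 < C) (hCS : C < S)
    (B : Matrix (Fin S) (Fin C) ℝ)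
    (lam : Fin C → ℝ) (hlam_pos : ∀ i, 0 < lam i) (hlam : Antitone lam)
    (hcharB : (B * Bᵀ).charpoly =
      (∏ i, (X - Polynomial.C (lam i))) * X ^ (S - C))
    (σ2 : Fin S → ℝ) (sbar : ℝ)
    (δ : ℝ) (hδub : ∀ j, |σ2 j - sbar| ≤ δ)
    (hgap : 2 * δ < lam ⟨C - 1, by omega⟩)
    (μe : Fin S → ℝ) (hμanti : Antitone μe)
    (hcharSig : (B * Bᵀ + Matrix.diagonal σ2).charpoly =
      ∏ i, (X - Polynomial.C (μe i))) :
    lam ⟨C - 1, by omega⟩ + sbar - δ ≤ μe ⟨C - 1, by omega⟩ ∧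
    sbar + δ < lam ⟨C - 1, by omega⟩ + sbar - δ ∧
    μe ⟨C, hCS⟩ ≤ sbar + δ := by
  set lamC := lam ⟨C - 1, by omega⟩
  have hA : (B * Bᵀ).IsHermitian :=
    conjTranspose_eq_transpose_of_trivial B ▸ isHermitian_mul_conjTranspose_self B
  have hSig : (B * Bᵀ + diagonal σ2).IsHermitian := hA.add (isHermitian_diagonal σ2)
  have hcountB (p : ℝ → Prop) [DecidablePred p] :
      #{j | p (hA.eigenvalues j)} = #{i | p (lam i)} + if p 0 then S - C else 0 := by
    rw [hA.card_filter_eigenvalues_eq_countP_roots, hcharB,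
      countP_roots_fintype_prod_X_sub_C_mul_X_pow]
  have hcountSig (p : ℝ → Prop) [DecidablePred p] :
      #{j | p (hSig.eigenvalues j)} = #{i | p (μe i)} := by
    rw [hSig.card_filter_eigenvalues_eq_countP_roots, hcharSig, roots_fintype_prod_X_sub_C,
      card_filter_eq_countP_map]
  have hdiag x := abs_le.mp (abs_dotProduct_diagonal_mulVec_sub_le hδub x)
  have hlamC : ∀ i, lamC ≤ lam i := fun i => hlam (Fin.mk_le_mk.mpr (by omega))
  refine ⟨hμanti.le_apply_of_lt_card_filter ?_, by linarith, hμanti.apply_le_of_card_filter ?_⟩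
  · have := card_le_eigenvalues_le_card_le_eigenvalues_add (isHermitian_iff_isSymm.mp hA)
      hA.mulVec_eigenvectorBasis (isHermitian_iff_isSymm.mp hSig) hSig.mulVec_eigenvectorBasis
      (c := sbar - δ) (fun x => by linarith [hdiag x]) lamC
    rw [hcountB, hcountSig, filter_true_of_mem fun i _ => hlamC i, if_neg (hlam_pos _).not_ge,
      ← add_sub_assoc, card_univ, Fintype.card_fin] at this
    change C - 1 < _
    omega
  · have := card_eigenvalues_le_le_card_eigenvalues_le_add (isHermitian_iff_isSymm.mp hA)
      hA.mulVec_eigenvectorBasis (isHermitian_iff_isSymm.mp hSig) hSig.mulVec_eigenvectorBasis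
      (c := sbar + δ) (fun x => by linarith [hdiag x]) 0
    rw [hcountB (· ≤ 0), hcountSig (· ≤ 0 + (sbar + δ)),
      filter_false_of_mem fun i _ => (hlam_pos i).not_ge, if_pos le_rfl, zero_add] at this
    simpa using this
end
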